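/- arXiv:2406.17964 — 2 statements merged into one kernel-verified Lean document; each statement's English description precedes it below -/
import Mathlib

section
/- Let G = (I⁰, I¹; F; w) be an instance, let ι̅ ∈ {0,1} and 0 ≤ τ < 1. Suppose α^ι̅ is a refinement of the side-ι̅ weights achieving τ-multiplicative error, and α^ι is its proportional response. Then for every pair of nonnegative weights c = (c⁰, c¹), the value of the fractional matching c•α is at least ((1−τ)/(1+τ)) times the maximum value of a fractional matching in G^(c). -/
open Finset

variable {V : Type*} [DecidableEq V]

/-- `(I0, I1; F; w)` is a valid input instance: the vertex sets `I0`, `I1` are disjoint,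
every edge has its first endpoint in `I0` and second endpoint in `I1`,
and vertex weights are positive. -/
def IsInstance (I0 I1 : Finset V) (F : Finset (V × V)) (w : V → ℝ) : Prop :=
  Disjoint I0 I1 ∧ (∀ e ∈ F, e.1 ∈ I0 ∧ e.2 ∈ I1) ∧ (∀ v ∈ I0 ∪ I1, 0 < w v)

/-- Payload received by a side-0 vertex `i` from edge weights `a`
(the sum of `a` over edges incident to `i`). -/
noncomputable def payload0 (F : Finset (V × V)) (a : V × V → ℝ) (i : V) : ℝ :=
  ∑ e ∈ F.filter (fun e => e.1 = i), a e

/-- Payload received by a side-1 vertex `j` from edge weights `a`. -/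
noncomputable def payload1 (F : Finset (V × V)) (a : V × V → ℝ) (j : V) : ℝ :=
  ∑ e ∈ F.filter (fun e => e.2 = j), a e

/-- `a` is a refinement of the side-0 vertex weights. -/
def IsRefinement0 (I0 : Finset V) (F : Finset (V × V)) (w : V → ℝ) (a : V × V → ℝ) : Prop :=
  (∀ e, 0 ≤ a e) ∧ (∀ e, e ∉ F → a e = 0) ∧
    ∀ i ∈ I0, (∃ j, (i, j) ∈ F) → payload0 F a i = w i

/-- `a` is a refinement of the side-1 vertex weights. -/
def IsRefinement1 (I1 : Finset V) (F : Finset (V × V)) (w : V → ℝ) (a : V × V → ℝ) : Prop :=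
  (∀ e, 0 ≤ a e) ∧ (∀ e, e ∉ F → a e = 0) ∧
    ∀ j ∈ I1, (∃ i, (i, j) ∈ F) → payload1 F a j = w j

/-- Payload density at a side-0 vertex. -/
noncomputable def density0 (F : Finset (V × V)) (w : V → ℝ) (a : V × V → ℝ) (i : V) : ℝ :=
  payload0 F a i / w i

/-- Payload density at a side-1 vertex. -/
noncomputable def density1 (F : Finset (V × V)) (w : V → ℝ) (a : V × V → ℝ) (j : V) : ℝ :=
  payload1 F a j / w j

/-- A side-0 refinement is locally maximin: positive weight is sent only to neighbours
of minimum payload density. -/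
def LocallyMaximin0 (F : Finset (V × V)) (w : V → ℝ) (a : V × V → ℝ) : Prop :=
  ∀ e ∈ F, 0 < a e → ∀ k, (e.1, k) ∈ F → density1 F w a e.2 ≤ density1 F w a k

/-- A side-1 refinement is locally maximin. -/
def LocallyMaximin1 (F : Finset (V × V)) (w : V → ℝ) (a : V × V → ℝ) : Prop :=
  ∀ e ∈ F, 0 < a e → ∀ k, (k, e.2) ∈ F → density0 F w a e.1 ≤ density0 F w a k

/-- `b` is the proportional response to the side-0 refinement `a`. -/
def IsPropRespOf0 (F : Finset (V × V)) (w : V → ℝ) (a b : V × V → ℝ) : Prop :=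
  (∀ e, e ∉ F → b e = 0) ∧ ∀ e ∈ F, b e = a e * w e.2 / payload1 F a e.2

/-- `a` is the proportional response to the side-1 refinement `b`. -/
def IsPropRespOf1 (F : Finset (V × V)) (w : V → ℝ) (b a : V × V → ℝ) : Prop :=
  (∀ e, e ∉ F → a e = 0) ∧ ∀ e ∈ F, a e = b e * w e.1 / payload0 F b e.1

/-- Feasible fractional matching for the vertex-constrained instance `G^(c)`. -/
def FeasibleMatching (I0 I1 : Finset V) (F : Finset (V × V)) (w : V → ℝ)
    (c0 c1 : ℝ) (x : V × V → ℝ) : Prop :=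
  (∀ e, 0 ≤ x e) ∧ (∀ e, e ∉ F → x e = 0) ∧
    (∀ i ∈ I0, payload0 F x i ≤ c0 * w i) ∧ (∀ j ∈ I1, payload1 F x j ≤ c1 * w j)

/-- Value of a fractional matching. -/
noncomputable def matchVal (F : Finset (V × V)) (x : V × V → ℝ) : ℝ := ∑ e ∈ F, x e

/-- The fractional matching `c • α` induced by a refinement pair. -/
noncomputable def cdot (c0 c1 : ℝ) (a0 a1 : V × V → ℝ) : V × V → ℝ :=
  fun e => min (c0 * a0 e) (c1 * a1 e)

/-!
For an exact locally maximin refinement of the side-0 weights with side-1 payloads `p*`, the sum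
`∑ j, min (c0 * p* j) (c1 * w j)` bounds every fractional matching of `G^(c)`: the side-1 vertices
with `c1 * w ≤ c0 * p*` together with the side-0 neighbours of the remaining ones form a vertex
cover, and local maximinality makes those side-0 vertices send all their weight to the remaining
ones. The matching `c • α` built from a proportional response has value exactly
`∑ j, min (c0 * p j) (c1 * w j)`, and a `τ`-error gives `p ≥ (1 - τ) p*`; this even yields the
factor `1 - τ`. The case `ι̅ = 1` follows by exchanging the two sides.
-/

section Payload

variable {F : Finset (V × V)} {a b : V × V → ℝ}

lemma payload0_eq_zero_of_isolated {i : V} (h : ∀ j, (i, j) ∉ F) : payload0 F a i = 0 :=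
  sum_eq_zero fun e he => by
    obtain ⟨heF, rfl⟩ := mem_filter.1 he
    exact absurd heF (h e.2)

lemma payload1_eq_zero_of_isolated {j : V} (h : ∀ i, (i, j) ∉ F) : payload1 F a j = 0 :=
  sum_eq_zero fun e he => by
    obtain ⟨heF, rfl⟩ := mem_filter.1 he
    exact absurd heF (h e.1)

lemma payload1_nonneg (ha : ∀ e, 0 ≤ a e) (j : V) : 0 ≤ payload1 F a j :=
  sum_nonneg fun e _ => ha e

lemma payload0_mono (h : ∀ e, a e ≤ b e) (i : V) : payload0 F a i ≤ payload0 F b i :=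
  sum_le_sum fun e _ => h e

lemma payload1_mono (h : ∀ e, a e ≤ b e) (j : V) : payload1 F a j ≤ payload1 F b j :=
  sum_le_sum fun e _ => h e

lemma payload0_const_mul (c : ℝ) (i : V) :
    payload0 F (fun e => c * a e) i = c * payload0 F a i :=
  (mul_sum _ _ _).symm

lemma payload1_const_mul (c : ℝ) (j : V) :
    payload1 F (fun e => c * a e) j = c * payload1 F a j :=
  (mul_sum _ _ _).symm

lemma sum_payload0 (S : Finset V) : ∑ i ∈ S, payload0 F a i = ∑ e ∈ F with e.1 ∈ S, a e :=
  sum_fiberwise_eq_sum_filter F S Prod.fst a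

lemma sum_payload1 (T : Finset V) : ∑ j ∈ T, payload1 F a j = ∑ e ∈ F with e.2 ∈ T, a e :=
  sum_fiberwise_eq_sum_filter F T Prod.snd a

end Payload

section Refinement

variable {I0 I1 : Finset V} {F : Finset (V × V)} {w : V → ℝ} {a b : V × V → ℝ}

lemma IsRefinement0.payload0_le (ha : IsRefinement0 I0 F w a) {i : V} (hi : i ∈ I0)
    (hw : 0 ≤ w i) : payload0 F a i ≤ w i := by
  by_cases hnb : ∃ j, (i, j) ∈ F
  · exact (ha.2.2 i hi hnb).le
  · push Not at hnb
    rw [payload0_eq_zero_of_isolated hnb]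
    exact hw

lemma IsRefinement1.payload1_le (ha : IsRefinement1 I1 F w a) {j : V} (hj : j ∈ I1)
    (hw : 0 ≤ w j) : payload1 F a j ≤ w j := by
  by_cases hnb : ∃ i, (i, j) ∈ F
  · exact (ha.2.2 j hj hnb).le
  · push Not at hnb
    rw [payload1_eq_zero_of_isolated hnb]
    exact hw

lemma feasibleMatching_cdot {c0 c1 : ℝ} (ha : IsRefinement0 I0 F w a)
    (hb : IsRefinement1 I1 F w b) (hw : ∀ v ∈ I0 ∪ I1, 0 ≤ w v) (hc0 : 0 ≤ c0)
    (hc1 : 0 ≤ c1) : FeasibleMatching I0 I1 F w c0 c1 (cdot c0 c1 a b) := by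
  refine ⟨fun e => le_min (mul_nonneg hc0 (ha.1 e)) (mul_nonneg hc1 (hb.1 e)),
    fun e he => ?_, fun i hi => ?_, fun j hj => ?_⟩
  · simp [cdot, ha.2.1 e he, hb.2.1 e he]
  · calc payload0 F (cdot c0 c1 a b) i ≤ payload0 F (fun e => c0 * a e) i :=
          payload0_mono (fun e => min_le_left _ _) i
      _ = c0 * payload0 F a i := payload0_const_mul c0 i
      _ ≤ c0 * w i := by gcongr; exact ha.payload0_le hi (hw i (mem_union_left _ hi))
  · calc payload1 F (cdot c0 c1 a b) j ≤ payload1 F (fun e => c1 * b e) j :=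
          payload1_mono (fun e => min_le_right _ _) j
      _ = c1 * payload1 F b j := payload1_const_mul c1 j
      _ ≤ c1 * w j := by gcongr; exact hb.payload1_le hj (hw j (mem_union_right _ hj))

lemma IsRefinement0.sum_le_sum_payload1 (ha : IsRefinement0 I0 F w a) {S T : Finset V}
    (hS : ∀ i ∈ S, i ∈ I0 ∧ ∃ j, (i, j) ∈ F) (hST : ∀ e ∈ F, e.1 ∈ S → 0 < a e → e.2 ∈ T) :
    ∑ i ∈ S, w i ≤ ∑ j ∈ T, payload1 F a j := by
  rw [← sum_congr rfl fun i hi => ha.2.2 i (hS i hi).1 (hS i hi).2, sum_payload0,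
    sum_payload1, sum_filter, sum_filter]
  refine sum_le_sum fun e he => ?_
  split_ifs with hes het het
  · exact le_rfl
  · exact not_lt.1 fun hpos => het (hST e he hes hpos)
  · exact ha.1 e
  · exact le_rfl

end Refinement

section Matching

variable {I0 I1 : Finset V} {F : Finset (V × V)} {w : V → ℝ} {c0 c1 : ℝ} {x : V × V → ℝ}

lemma FeasibleMatching.matchVal_le_of_cover (hx : FeasibleMatching I0 I1 F w c0 c1 x)
    {S T : Finset V} (hS : S ⊆ I0) (hT : T ⊆ I1) (hcover : ∀ e ∈ F, e.1 ∈ S ∨ e.2 ∈ T) :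
    matchVal F x ≤ c0 * ∑ i ∈ S, w i + c1 * ∑ j ∈ T, w j := by
  have hsplit : matchVal F x ≤ ∑ e ∈ F with e.1 ∈ S, x e + ∑ e ∈ F with e.2 ∈ T, x e := by
    rw [matchVal, ← sum_filter_add_sum_filter_not F (fun e => e.1 ∈ S)]
    refine add_le_add_right (sum_le_sum_of_subset_of_nonneg ?_ fun e _ _ => hx.1 e) _
    intro e he
    rw [mem_filter] at he ⊢
    exact ⟨he.1, (hcover e he.1).resolve_left he.2⟩
  rw [← sum_payload0, ← sum_payload1] at hsplit
  calc matchVal F x ≤ _ := hsplit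
    _ ≤ ∑ i ∈ S, c0 * w i + ∑ j ∈ T, c1 * w j :=
        add_le_add (sum_le_sum fun i hi => hx.2.2.1 i (hS hi))
          (sum_le_sum fun j hj => hx.2.2.2 j (hT hj))
    _ = _ := by rw [mul_sum, mul_sum]

lemma LocallyMaximin0.mul_payload1_lt {a : V × V → ℝ} (ha : LocallyMaximin0 F w a)
    {e : V × V} (he : e ∈ F) (hpos : 0 < a e) {k : V} (hk : (e.1, k) ∈ F) (hwe : 0 < w e.2)
    (hwk : 0 < w k) (hc0 : 0 ≤ c0) (hlt : c0 * payload1 F a k < c1 * w k) :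
    c0 * payload1 F a e.2 < c1 * w e.2 := by
  have hk' : c0 * density1 F w a k < c1 := by
    rwa [density1, ← mul_div_assoc, div_lt_iff₀ hwk]
  have he' := (mul_le_mul_of_nonneg_left (ha e he hpos k hk) hc0).trans_lt hk'
  rwa [density1, ← mul_div_assoc, div_lt_iff₀ hwe] at he'

theorem FeasibleMatching.matchVal_le_sum_min_payload1 {a : V × V → ℝ}
    (hF : ∀ e ∈ F, e.1 ∈ I0 ∧ e.2 ∈ I1) (hw1 : ∀ j ∈ I1, 0 < w j)
    (ha : IsRefinement0 I0 F w a) (hmax : LocallyMaximin0 F w a) (hc0 : 0 ≤ c0)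
    (hx : FeasibleMatching I0 I1 F w c0 c1 x) :
    matchVal F x ≤ ∑ j ∈ I1, min (c0 * payload1 F a j) (c1 * w j) := by
  classical
  set low : V → Prop := fun j => c0 * payload1 F a j < c1 * w j
  set S := I0.filter fun i => ∃ k, (i, k) ∈ F ∧ low k
  have hS : ∀ i ∈ S, i ∈ I0 ∧ ∃ j, (i, j) ∈ F := fun i hi =>
    have ⟨hi0, k, hk, _⟩ := mem_filter.1 hi
    ⟨hi0, k, hk⟩
  have hcover : ∀ e ∈ F, e.1 ∈ S ∨ e.2 ∈ I1.filter (¬ low ·) := fun e he => by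
    by_cases hlow : low e.2
    · exact Or.inl (mem_filter.2 ⟨(hF e he).1, e.2, he, hlow⟩)
    · exact Or.inr (mem_filter.2 ⟨(hF e he).2, hlow⟩)
  have hST : ∀ e ∈ F, e.1 ∈ S → 0 < a e → e.2 ∈ I1.filter low := fun e he heS hpos => by
    obtain ⟨-, k, hk, hlow⟩ := mem_filter.1 heS
    exact mem_filter.2 ⟨(hF e he).2, hmax.mul_payload1_lt he hpos hk (hw1 _ (hF e he).2)
      (hw1 k (hF _ hk).2) hc0 hlow⟩
  calc matchVal F x ≤ c0 * ∑ i ∈ S, w i + c1 * ∑ j ∈ I1 with ¬ low j, w j :=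
        hx.matchVal_le_of_cover (filter_subset _ _) (filter_subset _ _) hcover
    _ ≤ c0 * ∑ j ∈ I1 with low j, payload1 F a j + c1 * ∑ j ∈ I1 with ¬ low j, w j := by
        gcongr
        exact ha.sum_le_sum_payload1 hS hST
    _ = ∑ j ∈ I1, min (c0 * payload1 F a j) (c1 * w j) := by
        rw [mul_sum, mul_sum, ← sum_filter_add_sum_filter_not I1 low]
        congr 1 <;> refine sum_congr rfl fun j hj => ?_
        · exact (min_eq_left (mem_filter.1 hj).2.le).symm
        · exact (min_eq_right (not_lt.1 (mem_filter.1 hj).2)).symm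

end Matching

section ProportionalResponse

variable {I1 : Finset V} {F : Finset (V × V)} {w : V → ℝ} {a b : V × V → ℝ} {j : V}

lemma IsPropRespOf0.payload1_eq (hpr : IsPropRespOf0 F w a b) (j : V) :
    payload1 F b j = payload1 F a j * w j / payload1 F a j := by
  rw [payload1, sum_congr rfl fun e he => (mem_filter.1 he).2 ▸ hpr.2 e (mem_filter.1 he).1,
    ← sum_div, ← sum_mul]
  rfl

lemma IsPropRespOf0.payload1_ne_zero (hpr : IsPropRespOf0 F w a b)
    (hb : IsRefinement1 I1 F w b) (hj : j ∈ I1) (hwj : 0 < w j) (hnb : ∃ i, (i, j) ∈ F) :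
    payload1 F a j ≠ 0 := by
  intro hzero
  have hwb := hb.2.2 j hj hnb
  rw [hpr.payload1_eq, hzero, zero_mul, zero_div] at hwb
  exact hwj.ne hwb

lemma IsPropRespOf0.payload1_cdot {c0 c1 : ℝ} (hpr : IsPropRespOf0 F w a b)
    (hb : IsRefinement1 I1 F w b) (ha : ∀ e, 0 ≤ a e) (hc1 : 0 ≤ c1) (hj : j ∈ I1)
    (hwj : 0 < w j) :
    payload1 F (cdot c0 c1 a b) j = min (c0 * payload1 F a j) (c1 * w j) := by
  by_cases hnb : ∃ i, (i, j) ∈ F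
  · have hp := hpr.payload1_ne_zero hb hj hwj hnb
    calc payload1 F (cdot c0 c1 a b) j
        = ∑ e ∈ F with e.2 = j, a e * min c0 (c1 * w j / payload1 F a j) := by
          refine sum_congr rfl fun e he => ?_
          obtain ⟨heF, rfl⟩ := mem_filter.1 he
          rw [cdot, hpr.2 e heF, mul_min_of_nonneg _ _ (ha e)]
          congr 1 <;> ring
      _ = payload1 F a j * min c0 (c1 * w j / payload1 F a j) := (sum_mul _ _ _).symm
      _ = min (c0 * payload1 F a j) (c1 * w j) := by
          rw [mul_min_of_nonneg _ _ (payload1_nonneg ha j), mul_comm, mul_div_cancel₀ _ hp]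
  · push Not at hnb
    rw [payload1_eq_zero_of_isolated hnb, payload1_eq_zero_of_isolated hnb, mul_zero,
      min_eq_left (mul_nonneg hc1 hwj.le)]

lemma IsPropRespOf0.matchVal_cdot {c0 c1 : ℝ} (hpr : IsPropRespOf0 F w a b)
    (hb : IsRefinement1 I1 F w b) (ha : ∀ e, 0 ≤ a e) (hF : ∀ e ∈ F, e.2 ∈ I1)
    (hw1 : ∀ j ∈ I1, 0 < w j) (hc1 : 0 ≤ c1) :
    matchVal F (cdot c0 c1 a b) = ∑ j ∈ I1, min (c0 * payload1 F a j) (c1 * w j) := by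
  rw [← sum_congr rfl fun j hj => hpr.payload1_cdot hb ha hc1 hj (hw1 j hj), sum_payload1,
    filter_true_of_mem hF, matchVal]

end ProportionalResponse

lemma one_sub_mul_payload1_le {F : Finset (V × V)} {w : V → ℝ} {a b : V × V → ℝ} {τ : ℝ}
    {j : V} (hwj : 0 < w j)
    (herr : |density1 F w a j - density1 F w b j| ≤ τ * density1 F w b j) :
    (1 - τ) * payload1 F b j ≤ payload1 F a j := by
  have h : (1 - τ) * density1 F w b j ≤ density1 F w a j := by linarith [(abs_le.1 herr).1]
  rwa [density1, density1, ← mul_div_assoc, div_le_div_iff_of_pos_right hwj] at h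

theorem one_sub_mul_matchVal_le_matchVal_cdot {I0 I1 : Finset V} {F : Finset (V × V)}
    {w : V → ℝ} {τ c0 c1 : ℝ} {astar a0 a1 x : V × V → ℝ}
    (hF : ∀ e ∈ F, e.1 ∈ I0 ∧ e.2 ∈ I1) (hw1 : ∀ j ∈ I1, 0 < w j) (hτ0 : 0 ≤ τ)
    (hτ1 : τ ≤ 1) (hastar : IsRefinement0 I0 F w astar) (hmax : LocallyMaximin0 F w astar)
    (ha0 : ∀ e, 0 ≤ a0 e) (ha1 : IsRefinement1 I1 F w a1)
    (herr : ∀ j ∈ I1, |density1 F w a0 j - density1 F w astar j| ≤ τ * density1 F w astar j)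
    (hpr : IsPropRespOf0 F w a0 a1) (hc0 : 0 ≤ c0) (hc1 : 0 ≤ c1)
    (hx : FeasibleMatching I0 I1 F w c0 c1 x) :
    (1 - τ) * matchVal F x ≤ matchVal F (cdot c0 c1 a0 a1) := by
  rw [hpr.matchVal_cdot ha1 ha0 (fun e he => (hF e he).2) hw1 hc1]
  calc (1 - τ) * matchVal F x
      ≤ (1 - τ) * ∑ j ∈ I1, min (c0 * payload1 F astar j) (c1 * w j) :=
        mul_le_mul_of_nonneg_left (hx.matchVal_le_sum_min_payload1 hF hw1 hastar hmax hc0)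
          (sub_nonneg.2 hτ1)
    _ ≤ ∑ j ∈ I1, min (c0 * payload1 F a0 j) (c1 * w j) := by
        rw [mul_sum]
        refine sum_le_sum fun j hj => ?_
        have hp := one_sub_mul_payload1_le (hw1 j hj) (herr j hj)
        have hwj := mul_nonneg hc1 (hw1 j hj).le
        rw [mul_min_of_nonneg _ _ (sub_nonneg.2 hτ1)]
        exact min_le_min (by nlinarith) (by nlinarith)

section Swap

def swapEdges {V : Type*} (F : Finset (V × V)) : Finset (V × V) :=
  F.map (Equiv.prodComm V V).toEmbedding

lemma mem_swapEdges {V : Type*} {F : Finset (V × V)} {e : V × V} :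
    e ∈ swapEdges F ↔ e.swap ∈ F :=
  mem_map_equiv

variable {I0 I1 : Finset V} {F : Finset (V × V)} {w : V → ℝ} {a b : V × V → ℝ}

lemma payload0_swapEdges (a : V × V → ℝ) (i : V) :
    payload0 (swapEdges F) (a ∘ Prod.swap) i = payload1 F a i := by
  rw [payload0, payload1, swapEdges, filter_map, sum_map]
  rfl

lemma payload1_swapEdges (a : V × V → ℝ) (j : V) :
    payload1 (swapEdges F) (a ∘ Prod.swap) j = payload0 F a j := by
  rw [payload0, payload1, swapEdges, filter_map, sum_map]
  rfl

lemma density1_swapEdges (a : V × V → ℝ) (i : V) :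
    density1 (swapEdges F) w (a ∘ Prod.swap) i = density0 F w a i := by
  rw [density1, density0, payload1_swapEdges]

lemma matchVal_swapEdges {V : Type*} (F : Finset (V × V)) (a : V × V → ℝ) :
    matchVal (swapEdges F) (a ∘ Prod.swap) = matchVal F a := by
  rw [matchVal, matchVal, swapEdges, sum_map]
  rfl

lemma cdot_comp_swap {V : Type*} (c0 c1 : ℝ) (a b : V × V → ℝ) :
    cdot c1 c0 (b ∘ Prod.swap) (a ∘ Prod.swap) = cdot c0 c1 a b ∘ Prod.swap :=
  funext fun _ => min_comm _ _

lemma IsRefinement0.swapEdges (ha : IsRefinement0 I0 F w a) :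
    IsRefinement1 I0 (swapEdges F) w (a ∘ Prod.swap) :=
  ⟨fun e => ha.1 e.swap, fun e he => ha.2.1 e.swap (mt mem_swapEdges.2 he),
    fun i hi ⟨j, hj⟩ => (payload1_swapEdges a i).trans (ha.2.2 i hi ⟨j, mem_swapEdges.1 hj⟩)⟩

lemma IsRefinement1.swapEdges (ha : IsRefinement1 I1 F w a) :
    IsRefinement0 I1 (swapEdges F) w (a ∘ Prod.swap) :=
  ⟨fun e => ha.1 e.swap, fun e he => ha.2.1 e.swap (mt mem_swapEdges.2 he),
    fun j hj ⟨i, hi⟩ => (payload0_swapEdges a j).trans (ha.2.2 j hj ⟨i, mem_swapEdges.1 hi⟩)⟩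

lemma LocallyMaximin1.swapEdges (ha : LocallyMaximin1 F w a) :
    LocallyMaximin0 (swapEdges F) w (a ∘ Prod.swap) := fun e he hpos k hk => by
  rw [density1_swapEdges, density1_swapEdges]
  exact ha e.swap (mem_swapEdges.1 he) hpos k (mem_swapEdges.1 hk)

lemma IsPropRespOf1.swapEdges (hpr : IsPropRespOf1 F w b a) :
    IsPropRespOf0 (swapEdges F) w (b ∘ Prod.swap) (a ∘ Prod.swap) :=
  ⟨fun e he => hpr.1 e.swap (mt mem_swapEdges.2 he), fun e he => by
    rw [payload1_swapEdges]
    exact hpr.2 e.swap (mem_swapEdges.1 he)⟩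

lemma FeasibleMatching.swapEdges {c0 c1 : ℝ} {x : V × V → ℝ}
    (hx : FeasibleMatching I0 I1 F w c0 c1 x) :
    FeasibleMatching I1 I0 (swapEdges F) w c1 c0 (x ∘ Prod.swap) :=
  ⟨fun e => hx.1 e.swap, fun e he => hx.2.1 e.swap (mt mem_swapEdges.2 he),
    fun j hj => (payload0_swapEdges x j).trans_le (hx.2.2.2 j hj),
    fun i hi => (payload1_swapEdges x i).trans_le (hx.2.2.1 i hi)⟩

end Swap

/-- **Approximate refinements give approximately universal matchings.**
Fix a side `ι̅ ∈ {0,1}` and `0 ≤ τ < 1`; suppose `α^ι̅` is a refinement of the side-`ι̅`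
weights achieving `τ`-multiplicative error (with respect to the density vector induced by a
locally maximin refinement of the side-`ι̅` weights, which is independent of its choice),
and `α^ι` is its proportional response.  Then for every pair of nonnegative weights
`c = (c0, c1)`, the fractional matching `c • α` is feasible and its value is at least
`((1-τ)/(1+τ))` times the maximum value of a fractional matching in `G^(c)`.
The choice of the side `ι̅` is expressed by the disjunction `hcase`. -/
theorem approx_refinement_approx_universal_matching
    (I0 I1 : Finset V) (F : Finset (V × V)) (w : V → ℝ)
    (hG : IsInstance I0 I1 F w)
    (τ : ℝ) (hτ0 : 0 ≤ τ) (hτ1 : τ < 1)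
    (astar : V × V → ℝ)
    (hastar : IsRefinement0 I0 F w astar) (hmastar : LocallyMaximin0 F w astar)
    (bstar : V × V → ℝ)
    (hbstar : IsRefinement1 I1 F w bstar) (hmbstar : LocallyMaximin1 F w bstar)
    (a0 a1 : V × V → ℝ)
    (ha0 : IsRefinement0 I0 F w a0) (ha1 : IsRefinement1 I1 F w a1)
    (hcase :
      ((∀ j ∈ I1, |density1 F w a0 j - density1 F w astar j| ≤ τ * density1 F w astar j) ∧
          IsPropRespOf0 F w a0 a1) ∨
      ((∀ i ∈ I0, |density0 F w a1 i - density0 F w bstar i| ≤ τ * density0 F w bstar i) ∧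
          IsPropRespOf1 F w a1 a0))
    (c0 c1 : ℝ) (hc0 : 0 ≤ c0) (hc1 : 0 ≤ c1) :
    FeasibleMatching I0 I1 F w c0 c1 (cdot c0 c1 a0 a1) ∧
      ∀ x, FeasibleMatching I0 I1 F w c0 c1 x →
        (1 - τ) / (1 + τ) * matchVal F x ≤ matchVal F (cdot c0 c1 a0 a1) := by
  obtain ⟨-, hF, hw⟩ := hG
  have hw0 : ∀ i ∈ I0, 0 < w i := fun i hi => hw i (mem_union_left _ hi)
  have hw1 : ∀ j ∈ I1, 0 < w j := fun j hj => hw j (mem_union_right _ hj)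
  refine ⟨feasibleMatching_cdot ha0 ha1 (fun v hv => (hw v hv).le) hc0 hc1, fun x hx => ?_⟩
  have hbound : (1 - τ) * matchVal F x ≤ matchVal F (cdot c0 c1 a0 a1) := by
    rcases hcase with ⟨herr, hpr⟩ | ⟨herr, hpr⟩
    · exact one_sub_mul_matchVal_le_matchVal_cdot hF hw1 hτ0 hτ1.le hastar hmastar ha0.1 ha1
        herr hpr hc0 hc1 hx
    · have hF' : ∀ e ∈ swapEdges F, e.1 ∈ I1 ∧ e.2 ∈ I0 := fun e he =>
        (hF e.swap (mem_swapEdges.1 he)).symm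
      have hswap := one_sub_mul_matchVal_le_matchVal_cdot hF' hw0 hτ0 hτ1.le hbstar.swapEdges
        hmbstar.swapEdges ha1.swapEdges.1 ha0.swapEdges
        (by simpa only [density1_swapEdges] using herr) hpr.swapEdges hc1 hc0 hx.swapEdges
      rwa [cdot_comp_swap, matchVal_swapEdges, matchVal_swapEdges] at hswap
  calc (1 - τ) / (1 + τ) * matchVal F x ≤ (1 - τ) * matchVal F x :=
        mul_le_mul_of_nonneg_right (div_le_self (by linarith) (by linarith))
          (sum_nonneg fun e _ => hx.1 e)
    _ ≤ matchVal F (cdot c0 c1 a0 a1) := hbound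
end

section
/- Let G = (I⁰, I¹; F; w) be a distribution instance and let (α⁰, α¹) be a refinement pair that is locally maximin on both sides and mutually proportional responses. Then for every refinement pair (β⁰, β¹) of G and every x ∈ [0,1], Pow(α⁰‖α¹)(x) ≤ Pow(β⁰‖β¹)(x). In particular, any two refinement pairs that are both locally maximin on both sides and mutually proportional responses give rise to the same power function. -/
open Finset

variable {V : Type*} [DecidableEq V]

/-- A distribution instance: an instance where every vertex has at least one neighbour
and the vertex weights on each side sum to 1. -/
def IsDistInstance (I0 I1 : Finset V) (F : Finset (V × V)) (w : V → ℝ) : Prop :=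
  IsInstance I0 I1 F w ∧
    (∀ i ∈ I0, ∃ j, (i, j) ∈ F) ∧ (∀ j ∈ I1, ∃ i, (i, j) ∈ F) ∧
    (∑ i ∈ I0, w i = 1) ∧ (∑ j ∈ I1, w j = 1)

/-- The power function `Pow(P ‖ Q)(x)`: the maximum of `Σ t·Q` over `t : F → [0,1]`
with `Σ t·P ≤ x` (fractional knapsack). -/
noncomputable def powFn (F : Finset (V × V)) (P Q : V × V → ℝ) (x : ℝ) : ℝ :=
  sSup {v : ℝ | ∃ t : V × V → ℝ, (∀ e, 0 ≤ t e ∧ t e ≤ 1) ∧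
    (∑ e ∈ F, t e * P e) ≤ x ∧ v = ∑ e ∈ F, t e * Q e}

/-!
The power function is the value of a fractional knapsack, so by LP duality
`Pow(P‖Q)(x) = min_{c ≥ 0} (c·x + Σ (Q - c·P)⁺)`, the minimum being attained at the threshold
ratio `c` of the greedy solution. As `Σ (Q - c·P)⁺ = 1 - Σ min(Q, c·P)`, it suffices that the
locally maximin pair maximizes `Σ min(α¹, c·α⁰)` for every `c`. For any refinement pair and any
`S ⊆ I⁰` this sum is at most the cut value `w(N(S)) + c·w(I⁰ \ S)`. Proportional response gives
`α¹ = ρ·α⁰`, where `ρ` is the payload density of `α¹` on `I⁰`, and for `S = {ρ ≤ c}` local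
maximin forces all `α¹`-mass entering `N(S)` to come from `S`, so this cut is attained.
-/

section PowerFunction

variable {α : Type*}

lemma mul_le_max_zero {t y : ℝ} (ht : t ∈ Set.Icc (0 : ℝ) 1) : t * y ≤ max y 0 :=
  (mul_le_mul_of_nonneg_left (le_max_left y 0) ht.1).trans
    (mul_le_of_le_one_left (le_max_right y 0) ht.2)

lemma sum_mul_le_dual (F : Finset α) (P Q t : α → ℝ) (ht : ∀ e, 0 ≤ t e ∧ t e ≤ 1) (c : ℝ) :
    ∑ e ∈ F, t e * Q e ≤ c * ∑ e ∈ F, t e * P e + ∑ e ∈ F, max (Q e - c * P e) 0 := by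
  rw [Finset.mul_sum, ← Finset.sum_add_distrib]
  refine Finset.sum_le_sum fun e _ => ?_
  have := mul_le_max_zero (y := Q e - c * P e) (ht e)
  linarith

lemma sum_max_sub_eq (F : Finset α) (P Q : α → ℝ) (c : ℝ) :
    ∑ e ∈ F, max (Q e - c * P e) 0 = ∑ e ∈ F, Q e - ∑ e ∈ F, min (Q e) (c * P e) := by
  rw [← Finset.sum_sub_distrib]
  refine Finset.sum_congr rfl fun e _ => ?_
  rcases le_total (Q e) (c * P e) with h | h
  · rw [min_eq_left h, max_eq_right (by linarith), sub_self]
  · rw [min_eq_right h, max_eq_left (by linarith)]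

lemma exists_ratio_threshold (F : Finset α) {P Q : α → ℝ} (hP : ∀ e, 0 ≤ P e)
    (hQ : ∀ e, 0 ≤ Q e) {x : ℝ} (hx : x ∈ Set.Icc 0 (∑ e ∈ F, P e)) :
    ∃ c, 0 ≤ c ∧ ∑ e ∈ F with c * P e < Q e, P e ≤ x ∧ x ≤ ∑ e ∈ F with c * P e ≤ Q e, P e := by
  set g : ℝ → ℝ := fun c => ∑ e ∈ F with c * P e < Q e, P e
  set h : ℝ → ℝ := fun c => ∑ e ∈ F with c * P e ≤ Q e, P e
  have gap (c c' : ℝ) (hcc' : ∀ e ∈ F, 0 < P e → c < Q e / P e → c' ≤ Q e / P e) :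
      g c ≤ h c' := by
    refine Finset.sum_le_sum_of_subset_of_nonneg (fun e he => ?_) fun e _ _ => hP e
    obtain ⟨heF, hlt⟩ := Finset.mem_filter.1 he
    refine Finset.mem_filter.2 ⟨heF, ?_⟩
    rcases (hP e).eq_or_lt with hPe | hPe
    · simpa [← hPe] using hQ e
    · rw [← le_div_iff₀ hPe]
      exact hcc' e heF hPe ((lt_div_iff₀ hPe).2 hlt)
  -- the threshold is the largest ratio `Q / P` (or `0`) at which `h` still reaches `x`
  set R : Finset ℝ := insert 0 (F.image fun e => Q e / P e)
  have hR (e) (he : e ∈ F) : Q e / P e ∈ R :=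
    Finset.mem_insert_of_mem (Finset.mem_image_of_mem _ he)
  set U := R.filter fun r => x ≤ h r
  have h0U : 0 ∈ U := by
    refine Finset.mem_filter.2 ⟨Finset.mem_insert_self _ _, ?_⟩
    simpa [h, Finset.filter_true_of_mem fun e _ => hQ e] using hx.2
  set c := U.max' ⟨0, h0U⟩
  have hcU : c ∈ U := U.max'_mem _
  refine ⟨c, U.le_max' 0 h0U, ?_, (Finset.mem_filter.1 hcU).2⟩
  by_cases hA : (R.filter (c < ·)).Nonempty
  · set c' := (R.filter (c < ·)).min' hA
    obtain ⟨hc'R, hcc'⟩ := Finset.mem_filter.1 ((R.filter (c < ·)).min'_mem hA)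
    have hc'x : h c' < x := by
      by_contra! hle
      exact (U.le_max' c' (Finset.mem_filter.2 ⟨hc'R, hle⟩)).not_gt hcc'
    refine (gap c c' fun e he _ hlt => ?_).trans hc'x.le
    exact (R.filter (c < ·)).min'_le _ (Finset.mem_filter.2 ⟨hR e he, hlt⟩)
  · refine (Finset.sum_eq_zero fun e he => ?_).trans_le hx.1
    obtain ⟨heF, hlt⟩ := Finset.mem_filter.1 he
    by_contra hPe
    have hPe : 0 < P e := (hP e).lt_of_ne' hPe
    exact hA ⟨_, Finset.mem_filter.2 ⟨hR e heF, (lt_div_iff₀ hPe).2 hlt⟩⟩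

omit [DecidableEq V] in
lemma powFn_bddAbove (F : Finset (V × V)) (P Q : V × V → ℝ) (x : ℝ) :
    BddAbove {v : ℝ | ∃ t : V × V → ℝ, (∀ e, 0 ≤ t e ∧ t e ≤ 1) ∧
      (∑ e ∈ F, t e * P e) ≤ x ∧ v = ∑ e ∈ F, t e * Q e} := by
  refine ⟨∑ e ∈ F, max (Q e - 0 * P e) 0, ?_⟩
  rintro v ⟨t, ht, -, rfl⟩
  simpa using sum_mul_le_dual F P Q t ht 0

omit [DecidableEq V] in
lemma powFn_le_dual (F : Finset (V × V)) (P Q : V × V → ℝ) {x c : ℝ} (hx : 0 ≤ x)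
    (hc : 0 ≤ c) : powFn F P Q x ≤ c * x + ∑ e ∈ F, max (Q e - c * P e) 0 := by
  refine csSup_le ⟨0, 0, fun _ => ⟨le_rfl, zero_le_one⟩, by simpa using hx, by simp⟩ ?_
  rintro v ⟨t, ht, htx, rfl⟩
  linarith [sum_mul_le_dual F P Q t ht c, mul_le_mul_of_nonneg_left htx hc]

omit [DecidableEq V] in
lemma dual_le_powFn (F : Finset (V × V)) (P Q : V × V → ℝ) {x c : ℝ}
    (hx : x ∈ Set.Icc (∑ e ∈ F with c * P e < Q e, P e) (∑ e ∈ F with c * P e ≤ Q e, P e)) :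
    c * x + ∑ e ∈ F, max (Q e - c * P e) 0 ≤ powFn F P Q x := by
  obtain ⟨θ, hθ, hθx⟩ : ∃ θ ∈ Set.Icc (0 : ℝ) 1, (1 - θ) * ∑ e ∈ F with c * P e < Q e, P e
      + θ * ∑ e ∈ F with c * P e ≤ Q e, P e = x := by
    rw [← segment_eq_Icc (hx.1.trans hx.2), segment_eq_image] at hx
    simpa using hx
  -- fill the edges of ratio above `c` completely and those of ratio exactly `c` to the fraction θ
  set t : V × V → ℝ := fun e =>
    (1 - θ) * (if c * P e < Q e then 1 else 0) + θ * (if c * P e ≤ Q e then 1 else 0)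
  have ht : ∀ e, 0 ≤ t e ∧ t e ≤ 1 := fun e => by
    obtain ⟨h0, h1⟩ := hθ
    simp only [t]; split_ifs <;> constructor <;> linarith
  have htP : ∑ e ∈ F, t e * P e = x := by
    simp only [t, add_mul, mul_assoc, ite_mul, one_mul, zero_mul, Finset.sum_add_distrib,
      ← Finset.mul_sum, ← Finset.sum_filter, hθx]
  have htQ : ∀ e, t e * (Q e - c * P e) = max (Q e - c * P e) 0 := fun e => by
    rcases lt_trichotomy (c * P e) (Q e) with h | h | h
    · simp [t, h, h.le]
    · simp [t, h]
    · simp [t, not_lt.2 h.le, not_le.2 h, max_eq_right (sub_nonpos.2 h.le)]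
  calc c * x + ∑ e ∈ F, max (Q e - c * P e) 0
      = ∑ e ∈ F, t e * Q e := by
        simp only [← htQ, ← htP, Finset.mul_sum, ← Finset.sum_add_distrib]
        exact Finset.sum_congr rfl fun e _ => by ring
    _ ≤ powFn F P Q x := le_csSup (powFn_bddAbove F P Q x) ⟨t, ht, htP.le, rfl⟩

omit [DecidableEq V] in
lemma exists_dual_le_powFn (F : Finset (V × V)) {P Q : V × V → ℝ} (hP : ∀ e, 0 ≤ P e)
    (hQ : ∀ e, 0 ≤ Q e) {x : ℝ} (hx : x ∈ Set.Icc 0 (∑ e ∈ F, P e)) :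
    ∃ c, 0 ≤ c ∧ c * x + ∑ e ∈ F, max (Q e - c * P e) 0 ≤ powFn F P Q x :=
  let ⟨c, hc, hlt, hle⟩ := exists_ratio_threshold F hP hQ hx
  ⟨c, hc, dual_le_powFn F P Q ⟨hlt, hle⟩⟩

end PowerFunction

lemma sum_filter_fst_mem_eq_sum_payload0 (F : Finset (V × V)) (S : Finset V) (f : V × V → ℝ) :
    ∑ e ∈ F with e.1 ∈ S, f e = ∑ i ∈ S, payload0 F f i := by
  simp only [payload0, Finset.sum_filter]
  rw [Finset.sum_comm]
  simp [Finset.sum_ite_eq]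

lemma sum_filter_snd_mem_eq_sum_payload1 (F : Finset (V × V)) (T : Finset V) (f : V × V → ℝ) :
    ∑ e ∈ F with e.2 ∈ T, f e = ∑ j ∈ T, payload1 F f j := by
  simp only [payload1, Finset.sum_filter]
  rw [Finset.sum_comm]
  simp [Finset.sum_ite_eq]

def neighbors (F : Finset (V × V)) (S : Finset V) : Finset V :=
  {e ∈ F | e.1 ∈ S}.image Prod.snd

lemma mem_neighbors {F : Finset (V × V)} {S : Finset V} {j : V} :
    j ∈ neighbors F S ↔ ∃ i ∈ S, (i, j) ∈ F := by
  simp [neighbors, and_comm]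

section Refinement

variable {I0 I1 : Finset V} {F : Finset (V × V)} {w : V → ℝ} {b : V × V → ℝ}

lemma IsRefinement0.sum_filter_fst_mem (hb : IsRefinement0 I0 F w b) {S : Finset V}
    (hS : ∀ i ∈ S, i ∈ I0 ∧ ∃ j, (i, j) ∈ F) : ∑ e ∈ F with e.1 ∈ S, b e = ∑ i ∈ S, w i := by
  rw [sum_filter_fst_mem_eq_sum_payload0]
  exact Finset.sum_congr rfl fun i hi => hb.2.2 i (hS i hi).1 (hS i hi).2

lemma IsRefinement1.sum_filter_snd_mem (hb : IsRefinement1 I1 F w b) {T : Finset V}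
    (hT : ∀ j ∈ T, j ∈ I1 ∧ ∃ i, (i, j) ∈ F) : ∑ e ∈ F with e.2 ∈ T, b e = ∑ j ∈ T, w j := by
  rw [sum_filter_snd_mem_eq_sum_payload1]
  exact Finset.sum_congr rfl fun j hj => hb.2.2 j (hT j hj).1 (hT j hj).2

lemma IsRefinement0.sum_filter_fst_not_mem (hG : IsInstance I0 I1 F w)
    (hn0 : ∀ i ∈ I0, ∃ j, (i, j) ∈ F) (hb : IsRefinement0 I0 F w b) (S : Finset V) :
    ∑ e ∈ F with e.1 ∉ S, b e = ∑ i ∈ I0 \ S, w i := by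
  rw [← hb.sum_filter_fst_mem fun i hi =>
    ⟨(Finset.mem_sdiff.1 hi).1, hn0 i (Finset.mem_sdiff.1 hi).1⟩]
  refine Finset.sum_congr (Finset.filter_congr fun e he => ?_) fun _ _ => rfl
  simp [(hG.2.1 e he).1]

lemma IsRefinement1.sum_filter_snd_mem_neighbors (hG : IsInstance I0 I1 F w)
    (hb : IsRefinement1 I1 F w b) (S : Finset V) :
    ∑ e ∈ F with e.2 ∈ neighbors F S, b e = ∑ j ∈ neighbors F S, w j :=
  hb.sum_filter_snd_mem fun _ hj =>
    let ⟨i, _, hij⟩ := mem_neighbors.1 hj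
    ⟨(hG.2.1 _ hij).2, i, hij⟩

lemma IsRefinement0.sum_eq_one (hG : IsDistInstance I0 I1 F w) (hb : IsRefinement0 I0 F w b) :
    ∑ e ∈ F, b e = 1 := by
  rw [← hG.2.2.2.1, ← hb.sum_filter_fst_mem fun i hi => ⟨hi, hG.2.1 i hi⟩,
    Finset.filter_true_of_mem fun e he => (hG.1.2.1 e he).1]

lemma IsRefinement1.sum_eq_one (hG : IsDistInstance I0 I1 F w) (hb : IsRefinement1 I1 F w b) :
    ∑ e ∈ F, b e = 1 := by
  rw [← hG.2.2.2.2, ← hb.sum_filter_snd_mem fun j hj => ⟨hj, hG.2.2.1 j hj⟩,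
    Finset.filter_true_of_mem fun e he => (hG.1.2.1 e he).2]

end Refinement

section Cut

variable {I0 I1 : Finset V} {F : Finset (V × V)} {w : V → ℝ} {a0 a1 b0 b1 : V × V → ℝ}

lemma filter_fst_mem_subset_filter_snd_mem_neighbors (F : Finset (V × V)) (S : Finset V) :
    {e ∈ F | e.1 ∈ S} ⊆ {e ∈ F | e.2 ∈ neighbors F S} := fun _ he =>
  Finset.mem_filter.2 ⟨(Finset.mem_filter.1 he).1, Finset.mem_image_of_mem _ he⟩

lemma sum_min_le_cut (hG : IsInstance I0 I1 F w) (hn0 : ∀ i ∈ I0, ∃ j, (i, j) ∈ F)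
    (hb0 : IsRefinement0 I0 F w b0) (hb1 : IsRefinement1 I1 F w b1) (S : Finset V) (c : ℝ) :
    ∑ e ∈ F, min (b1 e) (c * b0 e) ≤ ∑ j ∈ neighbors F S, w j + c * ∑ i ∈ I0 \ S, w i := by
  rw [← Finset.sum_filter_add_sum_filter_not F (fun e => e.1 ∈ S)]
  gcongr ?_ + ?_
  · calc ∑ e ∈ F with e.1 ∈ S, min (b1 e) (c * b0 e)
        ≤ ∑ e ∈ F with e.1 ∈ S, b1 e := Finset.sum_le_sum fun _ _ => min_le_left _ _
      _ ≤ ∑ e ∈ F with e.2 ∈ neighbors F S, b1 e :=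
        Finset.sum_le_sum_of_subset_of_nonneg
          (filter_fst_mem_subset_filter_snd_mem_neighbors F S) fun e _ _ => hb1.1 e
      _ = ∑ j ∈ neighbors F S, w j := hb1.sum_filter_snd_mem_neighbors hG S
  · calc ∑ e ∈ F with e.1 ∉ S, min (b1 e) (c * b0 e)
        ≤ ∑ e ∈ F with e.1 ∉ S, c * b0 e := Finset.sum_le_sum fun _ _ => min_le_right _ _
      _ = c * ∑ i ∈ I0 \ S, w i := by
        rw [← Finset.mul_sum, hb0.sum_filter_fst_not_mem hG hn0 S]

lemma IsPropRespOf1.eq_density0_mul (hpr : IsPropRespOf1 F w b1 b0) (hb1 : ∀ e, 0 ≤ b1 e)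
    {e : V × V} (he : e ∈ F) (hw : w e.1 ≠ 0) : b1 e = density0 F w b1 e.1 * b0 e := by
  by_cases hp : payload0 F b1 e.1 = 0
  · have : b1 e ≤ payload0 F b1 e.1 :=
      Finset.single_le_sum (fun e _ => hb1 e) (Finset.mem_filter.2 ⟨he, rfl⟩)
    simp [density0, hp, le_antisymm (this.trans hp.le) (hb1 e)]
  · rw [hpr.2 e he, density0]
    field_simp

lemma sum_min_eq_cut (hG : IsInstance I0 I1 F w) (hn0 : ∀ i ∈ I0, ∃ j, (i, j) ∈ F)
    (ha0 : IsRefinement0 I0 F w a0) (ha1 : IsRefinement1 I1 F w a1)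
    (hm1 : LocallyMaximin1 F w a1) (hpr1 : IsPropRespOf1 F w a1 a0) (c : ℝ) :
    ∑ e ∈ F, min (a1 e) (c * a0 e) = ∑ j ∈ neighbors F {i ∈ I0 | density0 F w a1 i ≤ c}, w j
      + c * ∑ i ∈ I0 \ {i ∈ I0 | density0 F w a1 i ≤ c}, w i := by
  set S := {i ∈ I0 | density0 F w a1 i ≤ c}
  have hmem (e) (he : e ∈ F) : e.1 ∈ S ↔ density0 F w a1 e.1 ≤ c := by
    simp [S, (hG.2.1 e he).1]
  have ha1_eq (e) (he : e ∈ F) : a1 e = density0 F w a1 e.1 * a0 e :=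
    hpr1.eq_density0_mul ha1.1 he (hG.2.2 _ (Finset.mem_union_left _ (hG.2.1 e he).1)).ne'
  rw [← Finset.sum_filter_add_sum_filter_not F (fun e => e.1 ∈ S)]
  congr 1
  · calc ∑ e ∈ F with e.1 ∈ S, min (a1 e) (c * a0 e)
        = ∑ e ∈ F with e.1 ∈ S, a1 e := by
          refine Finset.sum_congr rfl fun e he => min_eq_left ?_
          obtain ⟨heF, heS⟩ := Finset.mem_filter.1 he
          rw [ha1_eq e heF]
          exact mul_le_mul_of_nonneg_right ((hmem e heF).1 heS) (ha0.1 e)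
      _ = ∑ e ∈ F with e.2 ∈ neighbors F S, a1 e := by
          -- by local maximin, an edge into `N(S)` carrying `a1`-mass starts at density `≤ c`
          refine Finset.sum_subset (filter_fst_mem_subset_filter_snd_mem_neighbors F S)
            fun e he hne => ?_
          obtain ⟨heF, hj⟩ := Finset.mem_filter.1 he
          obtain ⟨i, hiS, hiF⟩ := mem_neighbors.1 hj
          by_contra hpos
          refine hne (Finset.mem_filter.2 ⟨heF, (hmem e heF).2 ?_⟩)
          exact (hm1 e heF ((ha1.1 e).lt_of_ne' hpos) i hiF).trans ((hmem _ hiF).1 hiS)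
      _ = ∑ j ∈ neighbors F S, w j := ha1.sum_filter_snd_mem_neighbors hG S
  · calc ∑ e ∈ F with e.1 ∉ S, min (a1 e) (c * a0 e)
        = ∑ e ∈ F with e.1 ∉ S, c * a0 e := by
          refine Finset.sum_congr rfl fun e he => min_eq_right ?_
          obtain ⟨heF, heS⟩ := Finset.mem_filter.1 he
          rw [ha1_eq e heF]
          exact mul_le_mul_of_nonneg_right (not_le.1 (mt (hmem e heF).2 heS)).le (ha0.1 e)
      _ = c * ∑ i ∈ I0 \ S, w i := by
        rw [← Finset.mul_sum, ha0.sum_filter_fst_not_mem hG hn0 S]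

end Cut

lemma powFn_le_powFn_of_locallyMaximin1 {I0 I1 : Finset V} {F : Finset (V × V)} {w : V → ℝ}
    {a0 a1 b0 b1 : V × V → ℝ} (hG : IsDistInstance I0 I1 F w)
    (ha0 : IsRefinement0 I0 F w a0) (ha1 : IsRefinement1 I1 F w a1)
    (hm1 : LocallyMaximin1 F w a1) (hpr1 : IsPropRespOf1 F w a1 a0)
    (hb0 : IsRefinement0 I0 F w b0) (hb1 : IsRefinement1 I1 F w b1) {x : ℝ}
    (hx : x ∈ Set.Icc (0 : ℝ) 1) : powFn F a0 a1 x ≤ powFn F b0 b1 x := by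
  obtain ⟨c, hc, hdual⟩ :=
    exists_dual_le_powFn F hb0.1 hb1.1 (x := x) (by rwa [hb0.sum_eq_one hG])
  have hhinge : ∑ e ∈ F, max (a1 e - c * a0 e) 0 ≤ ∑ e ∈ F, max (b1 e - c * b0 e) 0 := by
    rw [sum_max_sub_eq, sum_max_sub_eq, ha1.sum_eq_one hG, hb1.sum_eq_one hG,
      sum_min_eq_cut hG.1 hG.2.1 ha0 ha1 hm1 hpr1]
    linarith [sum_min_le_cut hG.1 hG.2.1 hb0 hb1 {i ∈ I0 | density0 F w a1 i ≤ c} c]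
  calc powFn F a0 a1 x ≤ c * x + ∑ e ∈ F, max (a1 e - c * a0 e) 0 :=
        powFn_le_dual F a0 a1 hx.1 hc
    _ ≤ c * x + ∑ e ∈ F, max (b1 e - c * b0 e) 0 := by gcongr
    _ ≤ powFn F b0 b1 x := hdual

theorem locally_maximin_pair_minimal_power_function_general
    (I0 I1 : Finset V) (F : Finset (V × V)) (w : V → ℝ)
    (hG : IsDistInstance I0 I1 F w)
    (a0 a1 : V × V → ℝ)
    (ha0 : IsRefinement0 I0 F w a0) (ha1 : IsRefinement1 I1 F w a1)
    (hm1 : LocallyMaximin1 F w a1)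
    (hpr1 : IsPropRespOf1 F w a1 a0) :
    (∀ b0 b1 : V × V → ℝ, IsRefinement0 I0 F w b0 → IsRefinement1 I1 F w b1 →
      ∀ x ∈ Set.Icc (0:ℝ) 1, powFn F a0 a1 x ≤ powFn F b0 b1 x) ∧
    (∀ a0' a1' : V × V → ℝ, IsRefinement0 I0 F w a0' → IsRefinement1 I1 F w a1' →
      LocallyMaximin0 F w a0' → LocallyMaximin1 F w a1' →
      IsPropRespOf0 F w a0' a1' → IsPropRespOf1 F w a1' a0' →
      ∀ x ∈ Set.Icc (0:ℝ) 1, powFn F a0 a1 x = powFn F a0' a1' x) :=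
  ⟨fun _ _ hb0 hb1 _ hx => powFn_le_powFn_of_locallyMaximin1 hG ha0 ha1 hm1 hpr1 hb0 hb1 hx,
    fun _ _ ha0' ha1' _ hm1' _ hpr1' _ hx => le_antisymm
      (powFn_le_powFn_of_locallyMaximin1 hG ha0 ha1 hm1 hpr1 ha0' ha1' hx)
      (powFn_le_powFn_of_locallyMaximin1 hG ha0' ha1' hm1' hpr1' ha0 ha1 hx)⟩

/-- **A locally maximin pair gives the minimal power function.**
In a distribution instance, if the refinement pair `(a0, a1)` is locally maximin on both
sides and mutually proportional responses, then its power function is pointwise minimal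
among all refinement pairs; in particular, any two such pairs give rise to the same
power function. -/
theorem locally_maximin_pair_minimal_power_function
    (I0 I1 : Finset V) (F : Finset (V × V)) (w : V → ℝ)
    (hG : IsDistInstance I0 I1 F w)
    (a0 a1 : V × V → ℝ)
    (ha0 : IsRefinement0 I0 F w a0) (ha1 : IsRefinement1 I1 F w a1)
    (hm0 : LocallyMaximin0 F w a0) (hm1 : LocallyMaximin1 F w a1)
    (hpr0 : IsPropRespOf0 F w a0 a1) (hpr1 : IsPropRespOf1 F w a1 a0) :
    (∀ b0 b1 : V × V → ℝ, IsRefinement0 I0 F w b0 → IsRefinement1 I1 F w b1 →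
      ∀ x ∈ Set.Icc (0:ℝ) 1, powFn F a0 a1 x ≤ powFn F b0 b1 x) ∧
    (∀ a0' a1' : V × V → ℝ, IsRefinement0 I0 F w a0' → IsRefinement1 I1 F w a1' →
      LocallyMaximin0 F w a0' → LocallyMaximin1 F w a1' →
      IsPropRespOf0 F w a0' a1' → IsPropRespOf1 F w a1' a0' →
      ∀ x ∈ Set.Icc (0:ℝ) 1, powFn F a0 a1 x = powFn F a0' a1' x) :=
  locally_maximin_pair_minimal_power_function_general I0 I1 F w hG a0 a1 ha0 ha1 hm1 hpr1
end
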